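/- For all positive integers r and k₁,…,k_r,l₁,…,l_r, the pairing of the right-nested Lie bracket [X_{k₁},[X_{k₂},[…,[X_{k_{r−1}},X_{k_r}]…]]] with z_{l₁}⋯z_{l_r} equals the pairing of the word X_{k₁}⋯X_{k_r} with ρ(z_{l₁}⋯z_{l_r}): ⟨[X_{k₁},[X_{k₂},[…,[X_{k_{r−1}},X_{k_r}]…]]], z_{l₁}⋯z_{l_r}⟩ = ⟨X_{k₁}⋯X_{k_r}, ρ(z_{l₁}⋯z_{l_r})⟩. -/

import Mathlib

open scoped BigOperators

/-- `H¹`: the ℚ-vector space with basis the words `z_{k₁}⋯z_{k_r}` in the letters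
`z_k` (`k` a positive integer), encoded as finitely supported functions on lists. -/
abbrev H1 : Type := List ℕ+ →₀ ℚ

/-- The basis word `z_{k₁}⋯z_{k_r}` of `H¹` (the empty list is the unit `1`). -/
noncomputable def W (l : List ℕ+) : H1 := Finsupp.single l 1

/-- Left multiplication by the letter `z_k` (linear extension of `w ↦ z_k w`). -/
noncomputable def consL (k : ℕ+) (h : H1) : H1 := Finsupp.mapDomain (fun w => k :: w) h

/-- Right multiplication by the letter `z_k` (linear extension of `w ↦ w z_k`). -/
noncomputable def mulRk (k : ℕ+) (h : H1) : H1 := Finsupp.mapDomain (fun w => w ++ [k]) h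

/-- The harmonic (stuffle) product on words:
`1 ∗ u = u ∗ 1 = u`, `z_k u ∗ z_l v = z_k(u ∗ z_l v) + z_l(z_k u ∗ v) + z_{k+l}(u ∗ v)`. -/
noncomputable def harmW : List ℕ+ → List ℕ+ → H1
  | [], v => W v
  | u, [] => W u
  | k :: u, l :: v =>
      consL k (harmW u (l :: v)) + consL l (harmW (k :: u) v) + consL (k + l) (harmW u v)
  termination_by u v => u.length + v.length

/-- The harmonic product `∗` on `H¹`, as the ℚ-bilinear extension of `harmW`. -/
noncomputable def harm (g h : H1) : H1 :=
  g.sum fun u c => h.sum fun v d => (c * d) • harmW u v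

/-- The product `ш̃` on words in the letters `z_k`:
`1 ш̃ u = u ш̃ 1 = u`, `z_k u ш̃ z_l v = z_k(u ш̃ z_l v) + z_l(z_k u ш̃ v)`. -/
noncomputable def shtW : List ℕ+ → List ℕ+ → H1
  | [], v => W v
  | u, [] => W u
  | k :: u, l :: v => consL k (shtW u (l :: v)) + consL l (shtW (k :: u) v)
  termination_by u v => u.length + v.length

/-- The shuffle product `ш̃` on `H¹` (on the alphabet `z₁, z₂, …`), bilinear extension. -/
noncomputable def sht (g h : H1) : H1 :=
  g.sum fun u c => h.sum fun v d => (c * d) • shtW u v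

/-- Addition of a natural number to a positive natural number. -/
def pplus (k : ℕ+) (e : ℕ) : ℕ+ := ⟨(k : ℕ) + e, by have := k.pos; omega⟩

/-- `σ_m` on words: `σ_m(z_{k₁}⋯z_{k_r}) = Σ_{e₁+⋯+e_r=m} ∏_j C(k_j+e_j-1, e_j) z_{k₁+e₁}⋯z_{k_r+e_r}`,
which is the word formula for `σ_m(1) = δ_{m,0}`, `σ_m(yw) = y(w ш x^m)`. -/
noncomputable def sigW : ℕ → List ℕ+ → H1
  | m, [] => if m = 0 then W [] else 0
  | m, k :: ks => ∑ e ∈ Finset.range (m + 1),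
      ((((k : ℕ) + e - 1).choose e : ℚ)) • consL (pplus k e) (sigW (m - e) ks)
  termination_by m ks => ks.length

/-- `σ_m : H¹ → H¹`, linear extension. -/
noncomputable def sig (m : ℕ) (h : H1) : H1 := h.sum fun ks c => c • sigW m ks

/-- `S` on words: the word formula for `S(1) = 1`, `S(yw) = y S₁(w)` where
`S₁(x) = x`, `S₁(y) = x + y`; explicitly `S(z_{k₁}⋯z_{k_r})` is the sum over all ways of
replacing separating commas by `+`. -/
noncomputable def StW : List ℕ+ → H1
  | [] => W []
  | [k] => W [k]
  | k :: l :: ks => consL k (StW (l :: ks)) + StW ((k + l) :: ks)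
  termination_by ks => ks.length

/-- `S : H¹ → H¹`, linear extension. -/
noncomputable def St (h : H1) : H1 := h.sum fun ks c => c • StW ks

/-- `S̃ = S ∘ d` on words, where `d(x) = x`, `d(y) = -y`, so `d` multiplies a word of
depth `r` by `(-1)^r`. -/
noncomputable def SttW (ks : List ℕ+) : H1 := ((-1 : ℚ)) ^ ks.length • StW ks

/-- `S̃ = S ∘ d : H¹ → H¹`, linear extension. -/
noncomputable def Stt (h : H1) : H1 := h.sum fun ks c => c • SttW ks

/-- `ψ` on words: `ψ(z_{k₁}⋯z_{k_r}) = Σ_{i=0}^{r-1} z_{k₁}⋯z_{k_i} ∗ S̃(σ₁(z_{k_r}⋯z_{k_{i+1}}))`. -/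
noncomputable def psiW (ks : List ℕ+) : H1 :=
  ∑ i ∈ Finset.range ks.length, harm (W (ks.take i)) (Stt (sigW 1 ((ks.drop i).reverse)))

/-- `ψ : yH → H¹`, linear extension. -/
noncomputable def psi (h : H1) : H1 := h.sum fun ks c => c • psiW ks

/-- `ψ̄` on words: `ψ̄(z_{k₁}⋯z_{k_r}) = Σ_{i=0}^{r-1} (-1)^{r-i} z_{k₁}⋯z_{k_i} ш̃ σ₁(z_{k_r}⋯z_{k_{i+1}})`. -/
noncomputable def psibW (ks : List ℕ+) : H1 :=
  ∑ i ∈ Finset.range ks.length,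
    ((-1 : ℚ)) ^ (ks.length - i) • sht (W (ks.take i)) (sigW 1 ((ks.drop i).reverse))

/-- `ψ̄ : yH → H¹`, linear extension. -/
noncomputable def psib (h : H1) : H1 := h.sum fun ks c => c • psibW ks

/-- `ρ` on words:
`ρ(z_{k₁}⋯z_{k_r}) = Σ_{i=1}^{r} (-1)^{r-i} (z_{k₁}⋯z_{k_{i-1}} ш̃ z_{k_r}⋯z_{k_{i+1}}) z_{k_i}`. -/
noncomputable def rhoW (ks : List ℕ+) : H1 :=
  ∑ i : Fin ks.length, ((-1 : ℚ)) ^ (ks.length - 1 - (i : ℕ)) •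
    mulRk (ks.get i) (sht (W (ks.take (i : ℕ))) (W ((ks.drop ((i : ℕ) + 1)).reverse)))

/-- `ρ : yH → yH`, linear extension. -/
noncomputable def rho (h : H1) : H1 := h.sum fun ks c => c • rhoW ks

/-- `yH ⊆ H¹`: the span of the nonempty words `z_{k₁}⋯z_{k_r}` (`r ≥ 1`). -/
noncomputable def yH1 : Submodule ℚ H1 := Submodule.span ℚ {h | ∃ k ks, h = W (k :: ks)}

/-- `yH ∗ yH`: the ℚ-span of the harmonic products `w₁ ∗ w₂` with `w₁, w₂ ∈ yH`. -/
noncomputable def harmSpan : Submodule ℚ H1 :=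
  Submodule.span ℚ {h | ∃ u ∈ yH1, ∃ v ∈ yH1, h = harm u v}

/-- `yH ш̃ yH`: the ℚ-span of the products `w₁ ш̃ w₂` with `w₁, w₂ ∈ yH`. -/
noncomputable def shtSpan : Submodule ℚ H1 :=
  Submodule.span ℚ {h | ∃ u ∈ yH1, ∃ v ∈ yH1, h = sht u v}
/-- `Y`: the free associative ℚ-algebra on the noncommuting variables `X₁, X₂, …`. -/
abbrev Y : Type := MonoidAlgebra ℚ (FreeMonoid ℕ+)

/-- The word `X_{k₁}⋯X_{k_r} ∈ Y`. -/
noncomputable def Xw (ks : List ℕ+) : Y := MonoidAlgebra.single (FreeMonoid.ofList ks) 1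

/-- The right-nested Lie bracket `[X_{k₁},[X_{k₂},[…,[X_{k_{r-1}},X_{k_r}]…]]]`
(with `[a,b] = ab - ba`, and equal to `X_{k₁}` for `r = 1`). -/
noncomputable def nbrack : List ℕ+ → Y
  | [] => 0
  | [k] => Xw [k]
  | k :: l :: ks => Xw [k] * nbrack (l :: ks) - nbrack (l :: ks) * Xw [k]

/-- The pairing `⟨·,·⟩ : Y × yH → ℚ`, with `⟨X_{k₁}⋯X_{k_r}, z_{l₁}⋯z_{l_s}⟩ = 1` if
`(k₁,…,k_r) = (l₁,…,l_s)` and `0` otherwise. -/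
noncomputable def pairY (a : Y) (h : H1) : ℚ :=
  Finsupp.sum a.coeff fun w c => c * h (FreeMonoid.toList w)

-- basic lemmas
lemma shtW_nil_left (v : List ℕ+) : shtW [] v = W v := by rw [shtW]
lemma shtW_cons_nil (k : ℕ+) (u : List ℕ+) : shtW (k :: u) [] = W (k :: u) := by
  rw [shtW]
  simp
lemma shtW_cons_cons (k l : ℕ+) (u v : List ℕ+) :
    shtW (k :: u) (l :: v) = consL k (shtW u (l :: v)) + consL l (shtW (k :: u) v) := by
  rw [shtW]

lemma sht_W_W (u v : List ℕ+) : sht (W u) (W v) = shtW u v := by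
  rw [sht, W, W, Finsupp.sum_single_index, Finsupp.sum_single_index] <;> simp

lemma consL_W (k : ℕ+) (u : List ℕ+) : consL k (W u) = W (k :: u) := by
  rw [consL, W, Finsupp.mapDomain_single]; rfl

lemma mulRk_W (k : ℕ+) (u : List ℕ+) : mulRk k (W u) = W (u ++ [k]) := by
  rw [mulRk, W, Finsupp.mapDomain_single]; rfl

lemma consL_add (k : ℕ+) (g h : H1) : consL k (g + h) = consL k g + consL k h :=
  Finsupp.mapDomain_add
lemma mulRk_add (k : ℕ+) (g h : H1) : mulRk k (g + h) = mulRk k g + mulRk k h :=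
  Finsupp.mapDomain_add
lemma consL_smul (k : ℕ+) (c : ℚ) (h : H1) : consL k (c • h) = c • consL k h :=
  Finsupp.mapDomain_smul c h
lemma mulRk_smul (k : ℕ+) (c : ℚ) (h : H1) : mulRk k (c • h) = c • mulRk k h :=
  Finsupp.mapDomain_smul c h
lemma consL_sum {ι : Type*} (k : ℕ+) (s : Finset ι) (f : ι → H1) :
    consL k (∑ i ∈ s, f i) = ∑ i ∈ s, consL k (f i) :=
  Finsupp.mapDomain_finset_sum
lemma mulRk_sum {ι : Type*} (k : ℕ+) (s : Finset ι) (f : ι → H1) :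
    mulRk k (∑ i ∈ s, f i) = ∑ i ∈ s, mulRk k (f i) :=
  Finsupp.mapDomain_finset_sum
lemma consL_mulRk (a b : ℕ+) (h : H1) : consL a (mulRk b h) = mulRk b (consL a h) := by
  rw [consL, mulRk, consL, mulRk, ← Finsupp.mapDomain_comp, ← Finsupp.mapDomain_comp]
  rfl

lemma consL_apply_cons (k a : ℕ+) (h : H1) (w : List ℕ+) :
    consL k h (a :: w) = if a = k then h w else 0 := by
  rw [consL]
  by_cases hak : a = k
  · subst hak
    rw [if_pos rfl]
    exact Finsupp.mapDomain_apply (fun x y hxy => by simpa using hxy) h w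
  · rw [if_neg hak]
    apply Finsupp.mapDomain_notin_range
    rintro ⟨x, hx⟩
    exact hak (List.cons.injEq .. ▸ hx).1.symm

lemma rhoW_range (ks : List ℕ+) : rhoW ks = ∑ i ∈ Finset.range ks.length,
    ((-1 : ℚ)) ^ (ks.length - 1 - i) •
      mulRk (ks.getD i 1) (shtW (ks.take i) ((ks.drop (i + 1)).reverse)) := by
  rw [rhoW, ← Fin.sum_univ_eq_sum_range]
  apply Finset.sum_congr rfl
  intro i _
  rw [sht_W_W, List.getD_eq_getElem _ _ i.isLt]
  rfl

lemma shtW_nil_right (u : List ℕ+) : shtW u [] = W u := by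
  cases u with
  | nil => exact shtW_nil_left []
  | cons k u => exact shtW_cons_nil k u

lemma take_append_le {α} {i : ℕ} (t s : List α) (h : i ≤ t.length) :
    (t ++ s).take i = t.take i := by
  rw [List.take_append, Nat.sub_eq_zero_of_le h, List.take_zero, List.append_nil]

lemma drop_append_le {α} {i : ℕ} (t s : List α) (h : i ≤ t.length) :
    (t ++ s).drop i = t.drop i ++ s := by
  rw [List.drop_append, Nat.sub_eq_zero_of_le h, List.drop_zero]

lemma getD_concat_length {α} (t : List α) (x d : α) : (t ++ [x]).getD t.length d = x := by
  rw [List.getD_append_right _ _ _ _ (le_refl _), Nat.sub_self, List.getD_cons_zero]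

lemma rhoW_rec (l b : ℕ+) (t₀ : List ℕ+) :
    rhoW (l :: (t₀ ++ [b])) = consL l (rhoW (t₀ ++ [b])) - consL b (rhoW (l :: t₀)) := by
  have hn1 : (t₀ ++ [b]).length = t₀.length + 1 := by simp
  have hn2 : (l :: (t₀ ++ [b])).length = t₀.length + 1 + 1 := by simp
  have hn3 : (l :: t₀).length = t₀.length + 1 := by simp
  have hA : consL l (rhoW (t₀ ++ [b])) =
      (∑ i ∈ Finset.range t₀.length, (-1:ℚ)^(t₀.length-i) • mulRk (t₀.getD i 1)
        (consL l (shtW (t₀.take i) (b :: (t₀.drop (i+1)).reverse))))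
      + W ((l :: t₀) ++ [b]) := by
    rw [rhoW_range, hn1, consL_sum, Finset.sum_range_succ]
    congr 1
    · refine Finset.sum_congr rfl fun i hi => ?_
      have hi' : i < t₀.length := Finset.mem_range.mp hi
      rw [consL_smul, consL_mulRk, List.getD_append _ _ _ _ (by omega),
          take_append_le _ _ (by omega), drop_append_le _ _ (by omega)]
      have h1 : ((t₀.drop (i+1)) ++ [b]).reverse = b :: (t₀.drop (i+1)).reverse := by simp
      rw [h1, Nat.add_sub_cancel]
    · have h2 : (t₀ ++ [b]).drop (t₀.length + 1) = [] := by simp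
      have h4 : t₀.length + 1 - 1 - t₀.length = 0 := by omega
      rw [consL_smul, consL_mulRk, getD_concat_length, take_append_le _ _ (le_refl _),
          List.take_length, h2, h4, pow_zero, one_smul,
          List.reverse_nil, shtW_nil_right, consL_W, mulRk_W]
  have hB : consL b (rhoW (l :: t₀)) =
      (∑ i ∈ Finset.range t₀.length, (-1:ℚ)^(t₀.length-1-i) • mulRk (t₀.getD i 1)
        (consL b (shtW (l :: t₀.take i) ((t₀.drop (i+1)).reverse))))
      + (-1:ℚ)^t₀.length • W (b :: (t₀.reverse ++ [l])) := by
    rw [rhoW_range, hn3, consL_sum, Finset.sum_range_succ']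
    congr 1
    · refine Finset.sum_congr rfl fun i hi => ?_
      have h4 : t₀.length + 1 - 1 - (i+1) = t₀.length - 1 - i := by omega
      rw [consL_smul, consL_mulRk, List.getD_cons_succ, List.take_succ_cons,
          List.drop_succ_cons, h4]
    · have h4 : t₀.length + 1 - 1 - 0 = t₀.length := by omega
      rw [consL_smul, List.getD_cons_zero, List.take_zero, List.drop_one, List.tail_cons,
          shtW_nil_left, mulRk_W, consL_W, h4]
  rw [hA, hB, rhoW_range, hn2, Finset.sum_range_succ', Finset.sum_range_succ]
  have e0 : ((-1:ℚ))^(t₀.length+1+1-1-0) • mulRk ((l :: (t₀ ++ [b])).getD 0 1)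
      (shtW ((l :: (t₀ ++ [b])).take 0) (((l :: (t₀ ++ [b])).drop (0+1)).reverse)) =
      -((-1:ℚ)^t₀.length • W (b :: (t₀.reverse ++ [l]))) := by
    rw [List.getD_cons_zero, List.take_zero, List.drop_one, List.tail_cons, shtW_nil_left]
    have h1 : (t₀ ++ [b]).reverse = b :: t₀.reverse := by simp
    rw [h1, mulRk_W]
    have h2 : t₀.length+1+1-1-0 = t₀.length+1 := by omega
    rw [h2, pow_succ, mul_neg_one, neg_smul]
    rfl
  have elast : ((-1:ℚ))^(t₀.length+1+1-1-(t₀.length+1)) • mulRk ((l :: (t₀ ++ [b])).getD (t₀.length+1) 1)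
      (shtW ((l :: (t₀ ++ [b])).take (t₀.length+1)) (((l :: (t₀ ++ [b])).drop (t₀.length+1+1)).reverse)) =
      W ((l :: t₀) ++ [b]) := by
    have h2 : t₀.length+1+1-1-(t₀.length+1) = 0 := by omega
    have h3 : (l :: (t₀ ++ [b])).drop (t₀.length+1+1) = [] := by simp
    rw [h2, pow_zero, one_smul, List.getD_cons_succ, getD_concat_length,
        List.take_succ_cons, take_append_le _ _ (le_refl _), List.take_length,
        h3, List.reverse_nil, shtW_nil_right, mulRk_W]
  have emid : (∑ i ∈ Finset.range t₀.length, ((-1:ℚ))^(t₀.length+1+1-1-(i+1)) •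
      mulRk ((l :: (t₀ ++ [b])).getD (i+1) 1)
      (shtW ((l :: (t₀ ++ [b])).take (i+1)) (((l :: (t₀ ++ [b])).drop (i+1+1)).reverse))) =
      (∑ i ∈ Finset.range t₀.length, (-1:ℚ)^(t₀.length-i) • mulRk (t₀.getD i 1)
        (consL l (shtW (t₀.take i) (b :: (t₀.drop (i+1)).reverse))))
      + -(∑ i ∈ Finset.range t₀.length, (-1:ℚ)^(t₀.length-1-i) • mulRk (t₀.getD i 1)
        (consL b (shtW (l :: t₀.take i) ((t₀.drop (i+1)).reverse)))) := by
    rw [← Finset.sum_neg_distrib, ← Finset.sum_add_distrib]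
    refine Finset.sum_congr rfl fun i hi => ?_
    have hi' : i < t₀.length := Finset.mem_range.mp hi
    have h2 : t₀.length+1+1-1-(i+1) = t₀.length - i := by omega
    rw [h2, List.getD_cons_succ, List.getD_append _ _ _ _ (by omega), List.take_succ_cons,
        take_append_le _ _ (by omega), List.drop_succ_cons, drop_append_le _ _ (by omega)]
    have h1 : ((t₀.drop (i+1)) ++ [b]).reverse = b :: (t₀.drop (i+1)).reverse := by simp
    rw [h1, shtW_cons_cons, mulRk_add, smul_add]
    congr 1
    have h3 : t₀.length - i = (t₀.length-1-i) + 1 := by omega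
    rw [h3, pow_succ, mul_neg_one, neg_smul]
  rw [e0, elast, emid]
  abel

lemma single_mul (x : FreeMonoid ℕ+) (B : Y) :
    (MonoidAlgebra.single x (1:ℚ) * B).coeff = Finsupp.mapDomain (fun w => x * w) B.coeff := by
  induction B using MonoidAlgebra.induction_linear with
  | zero => simp
  | add f g hf hg => rw [mul_add, MonoidAlgebra.coeff_add, hf, hg, MonoidAlgebra.coeff_add, Finsupp.mapDomain_add]
  | single a c =>
      rw [MonoidAlgebra.single_mul_single, one_mul, MonoidAlgebra.coeff_single, MonoidAlgebra.coeff_single, Finsupp.mapDomain_single]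

lemma mul_single (x : FreeMonoid ℕ+) (B : Y) :
    (B * MonoidAlgebra.single x (1:ℚ)).coeff = Finsupp.mapDomain (fun w => w * x) B.coeff := by
  induction B using MonoidAlgebra.induction_linear with
  | zero => simp
  | add f g hf hg => rw [add_mul, MonoidAlgebra.coeff_add, hf, hg, MonoidAlgebra.coeff_add, Finsupp.mapDomain_add]
  | single a c =>
      rw [MonoidAlgebra.single_mul_single, mul_one, MonoidAlgebra.coeff_single, MonoidAlgebra.coeff_single, Finsupp.mapDomain_single]

lemma toList_mul (x y : FreeMonoid ℕ+) :
    FreeMonoid.toList (x * y) = FreeMonoid.toList x ++ FreeMonoid.toList y := rfl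

lemma Xw_mul_apply_cons (k l : ℕ+) (t : List ℕ+) (B : Y) :
    (Xw [k] * B).coeff (FreeMonoid.ofList (l :: t)) = if k = l then B.coeff (FreeMonoid.ofList t) else 0 := by
  rw [Xw, single_mul]
  by_cases h : k = l
  · subst h
    rw [if_pos rfl]
    have : FreeMonoid.ofList (k :: t) = (fun w => FreeMonoid.ofList [k] * w) (FreeMonoid.ofList t) := rfl
    rw [this]
    apply Finsupp.mapDomain_apply
    intro a c hac
    have := congrArg FreeMonoid.toList hac
    rw [toList_mul, toList_mul] at this
    simpa using this
  · rw [if_neg h]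
    apply Finsupp.mapDomain_notin_range
    rintro ⟨w, hw⟩
    have := congrArg FreeMonoid.toList hw
    rw [toList_mul] at this
    simp only [FreeMonoid.toList_ofList] at this
    exact h (by simpa using (List.cons.injEq .. ▸ this).1)

lemma mul_Xw_apply_concat (k b : ℕ+) (u : List ℕ+) (B : Y) :
    (B * Xw [k]).coeff (FreeMonoid.ofList (u ++ [b])) = if k = b then B.coeff (FreeMonoid.ofList u) else 0 := by
  rw [Xw, mul_single]
  by_cases h : k = b
  · subst h
    rw [if_pos rfl]
    have : FreeMonoid.ofList (u ++ [k]) = (fun w => w * FreeMonoid.ofList [k]) (FreeMonoid.ofList u) := rfl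
    rw [this]
    apply Finsupp.mapDomain_apply
    intro a c hac
    have := congrArg FreeMonoid.toList hac
    rw [toList_mul, toList_mul] at this
    simpa using this
  · rw [if_neg h]
    apply Finsupp.mapDomain_notin_range
    rintro ⟨w, hw⟩
    have := congrArg FreeMonoid.toList hw
    rw [toList_mul] at this
    simp only [FreeMonoid.toList_ofList] at this
    have := (List.append_inj' this rfl).2
    exact h (by simpa using this)

lemma rhoW_single (l : ℕ+) : rhoW [l] = W [l] := by
  rw [rhoW_range]
  simp only [List.length_singleton, Finset.sum_range_one, Nat.sub_self, pow_zero, one_smul,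
    List.take_zero, List.drop_succ_cons, List.drop_nil, List.reverse_nil, shtW_nil_left,
    List.getD_cons_zero, mulRk_W, List.nil_append]

lemma main_coeff (ks ls : List ℕ+) (hne : ks ≠ []) (hlen : ks.length = ls.length) :
    (nbrack ks).coeff (FreeMonoid.ofList ls) = rhoW ls ks := by
  induction ks generalizing ls with
  | nil => exact absurd rfl hne
  | cons k ks' ih =>
    cases ks' with
    | nil =>
      obtain ⟨l, rfl⟩ : ∃ l, ls = [l] := by
        cases ls with
        | nil => simp at hlen
        | cons l t =>
          cases t with
          | nil => exact ⟨l, rfl⟩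
          | cons a t => simp at hlen
      rw [rhoW_single, nbrack, Xw, W, MonoidAlgebra.coeff_single]
      by_cases h : k = l
      · subst h; simp
      · rw [Finsupp.single_eq_of_ne', Finsupp.single_eq_of_ne']
        · intro hc
          have hlk : l = k := by simpa using hc
          exact h hlk.symm
        · intro hc
          have h2 : ([k] : List ℕ+) = [l] := hc
          exact h (by simpa using h2)
    | cons k₂ ks₂ =>
      have hlen2 : ls.length = ks₂.length + 2 := by
        simp only [List.length_cons] at hlen; omega
      obtain ⟨l, t, rfl⟩ : ∃ l t, ls = l :: t := by
        cases ls with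
        | nil => simp at hlen2
        | cons l t => exact ⟨l, t, rfl⟩
      have ht : t ≠ [] := by
        intro h; subst h; simp at hlen2
      obtain ⟨t₀, b, rfl⟩ : ∃ t₀ b, t = t₀ ++ [b] := by
        rcases t.eq_nil_or_concat with h | ⟨t₀, b, h⟩
        · exact absurd h ht
        · exact ⟨t₀, b, by simpa [List.concat_eq_append] using h⟩
      have hlt : t₀.length = ks₂.length := by
        simp at hlen2; omega
      have i1 : (nbrack (k₂ :: ks₂)).coeff (FreeMonoid.ofList (t₀ ++ [b])) = rhoW (t₀ ++ [b]) (k₂ :: ks₂) :=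
        ih _ (by simp) (by simp [hlt])
      have i2 : (nbrack (k₂ :: ks₂)).coeff (FreeMonoid.ofList (l :: t₀)) = rhoW (l :: t₀) (k₂ :: ks₂) :=
        ih _ (by simp) (by simp [hlt])
      have hL : (nbrack (k :: k₂ :: ks₂)).coeff (FreeMonoid.ofList (l :: (t₀ ++ [b]))) =
          (if k = l then (nbrack (k₂ :: ks₂)).coeff (FreeMonoid.ofList (t₀ ++ [b])) else 0)
          - (if k = b then (nbrack (k₂ :: ks₂)).coeff (FreeMonoid.ofList (l :: t₀)) else 0) := by
        rw [nbrack, MonoidAlgebra.coeff_sub, Finsupp.sub_apply, Xw_mul_apply_cons]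
        congr 1
        exact mul_Xw_apply_concat k b (l :: t₀) _
      rw [hL, rhoW_rec, Finsupp.sub_apply, consL_apply_cons, consL_apply_cons, i1, i2]

lemma pairY_W (a : Y) (ls : List ℕ+) : pairY a (W ls) = a.coeff (FreeMonoid.ofList ls) := by
  classical
  rw [pairY]
  have hc : ∀ w ∈ a.coeff.support, a.coeff w * (W ls) (FreeMonoid.toList w)
      = (if FreeMonoid.ofList ls = w then a.coeff w else 0) := by
    intro w _
    rw [W, Finsupp.single_apply]
    by_cases h : ls = FreeMonoid.toList w
    · rw [if_pos h, if_pos, mul_one]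
      exact congrArg FreeMonoid.ofList h |>.trans (by simp)
    · rw [if_neg h, if_neg, mul_zero]
      intro hcc
      exact h (by simpa using congrArg FreeMonoid.toList hcc)
  rw [Finsupp.sum_congr (g2 := fun w c => if FreeMonoid.ofList ls = w then c else 0) hc,
      Finsupp.sum_ite_self_eq]

lemma pairY_Xw (ks : List ℕ+) (h : H1) : pairY (Xw ks) h = h ks := by
  rw [pairY, Xw, MonoidAlgebra.coeff_single]
  rw [Finsupp.sum_single_index (by simp)]
  rw [one_mul]
  rfl

lemma rho_W (ls : List ℕ+) : rho (W ls) = rhoW ls := by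
  rw [rho, W, Finsupp.sum_single_index (by simp), one_smul]

/-- for positive integers `k₁,…,k_r` and `l₁,…,l_r`,
`⟨[X_{k₁},[X_{k₂},[…,[X_{k_{r-1}},X_{k_r}]…]]], z_{l₁}⋯z_{l_r}⟩ = ⟨X_{k₁}⋯X_{k_r}, ρ(z_{l₁}⋯z_{l_r})⟩`. -/
theorem pairing_nbrack_eq_pairing_rho
    (ks ls : List ℕ+) (hne : ks ≠ []) (hlen : ks.length = ls.length) :
    pairY (nbrack ks) (W ls) = pairY (Xw ks) (rho (W ls)) := by
  rw [pairY_W, pairY_Xw, rho_W]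
  exact main_coeff ks ls hne hlen
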